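/- Let X : [0,1] x Omega -> R be B([0,1]) x F-measurable, either right-continuous or left-continuous in the first variable for every fixed omega, and satisfying the integrability condition E[sup_{z in [0,1]} |X_z|] < infty. Then, for any complete sub-sigma-algebra G of F, the family {E[X_z | G] : z in [0,1]} admits a B([0,1]) x G-measurable modification: there exists a B([0,1]) x G-measurable function Y : [0,1] x Omega -> R such that, for each z in [0,1], Y_z = E[X_z | G] P-a.s. -/

import Mathlib

open MeasureTheory Filter Set Function
open scoped Classical

noncomputable section

namespace ZSDG

variable {Ω : Type*} {mΩ : MeasurableSpace Ω}

/-- The Stieltjes measure of a path (`0` if the path is not monotone right-continuous). -/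
def pathMeasure (ρ : ℝ → ℝ) : Measure ℝ :=
  if h : Monotone ρ ∧ ∀ x, ContinuousWithinAt ρ (Ici x) x then
    StieltjesFunction.measure ⟨ρ, h.1, h.2⟩
  else 0

/-- The jump of a path at a point. -/
def jump (ρ : ℝ → ℝ) (t : ℝ) : ℝ := ρ t - leftLim ρ t

/-- Left limit `ρ_{θ-}` of a process at a (random) time. -/
def preVal (ρ : ℝ → Ω → ℝ) (θ : Ω → ℝ) (ω : Ω) : ℝ := leftLim (fun s => ρ s ω) (θ ω)

/-- Càdlàg paths: right-continuous with left limits. -/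
def Cadlag (X : ℝ → Ω → ℝ) : Prop :=
  ∀ ω : Ω, (∀ t, ContinuousWithinAt (fun s => X s ω) (Ici t) t) ∧
    ∀ t, ∃ l : ℝ, Tendsto (fun s => X s ω) (nhdsWithin t (Iio t)) (nhds l)

/-- The class `𝒜°_θ(𝒢)` of generating processes of randomised stopping times after `θ`. -/
structure IsGen (𝒢 : Filtration ℝ mΩ) (T : ℝ) (θ : Ω → ℝ) (ρ : ℝ → Ω → ℝ) : Prop where
  adapted : Adapted 𝒢 ρ
  mono : ∀ ω, Monotone fun t => ρ t ω
  rightCont : ∀ ω t, ContinuousWithinAt (fun s => ρ s ω) (Ici t) t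
  preZero : ∀ ω, preVal ρ θ ω = 0
  endOne : ∀ ω, ρ T ω = 1

/-- Pure `𝒢`-stopping times with values in `[θ(ω), T]`. -/
def stoppingTimesIn (𝒢 : Filtration ℝ mΩ) (θ : Ω → ℝ) (T : ℝ) : Set (Ω → ℝ) :=
  {τ | IsStoppingTime 𝒢 (fun ω => (τ ω : WithTop ℝ)) ∧ ∀ ω, τ ω ∈ Icc (θ ω) T}

/-- `𝒯₀(𝒢)`: stopping times with values in `[0, T]`. -/
def T0 (𝒢 : Filtration ℝ mΩ) (T : ℝ) : Set (Ω → ℝ) :=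
  stoppingTimesIn 𝒢 (fun _ => 0) T

/-- The σ-algebra `𝒢_θ` at a random time (`⊥` if `θ` is not a stopping time). -/
def sigmaAt (𝒢 : Filtration ℝ mΩ) (θ : Ω → ℝ) : MeasurableSpace Ω :=
  if h : IsStoppingTime 𝒢 (fun ω => (θ ω : WithTop ℝ)) then h.measurableSpace else ⊥

/-- The σ-algebra `𝒢_{θ-}` strictly before a random time. -/
def sigmaAtPre (𝒢 : Filtration ℝ mΩ) (θ : Ω → ℝ) : MeasurableSpace Ω :=
  MeasurableSpace.generateFrom
    ({s | MeasurableSet[𝒢 0] s} ∪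
      {s | ∃ t : ℝ, ∃ A : Set Ω, MeasurableSet[𝒢 t] A ∧ s = A ∩ {ω | t < θ ω}})

/-- The generating process of the pure stopping time `τ`. -/
def pureGen (τ : Ω → ℝ) : ℝ → Ω → ℝ := fun t ω => if τ ω ≤ t then 1 else 0

/-- Pathwise payoff `𝒫(ξ, ζ)` of the game started at the random time `a`. -/
def payoffFrom (f g h : ℝ → Ω → ℝ) (T : ℝ) (a : Ω → ℝ) (ξ ζ : ℝ → Ω → ℝ) (ω : Ω) : ℝ :=
  (∫ t in Ico (a ω) T, f t ω * (1 - ζ t ω) ∂pathMeasure (fun s => ξ s ω)) +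
    (∫ t in Ico (a ω) T, g t ω * (1 - ξ t ω) ∂pathMeasure (fun s => ζ s ω)) +
    ∑' t : (Icc (a ω) T : Set ℝ),
      h (t : ℝ) ω * (jump (fun s => ζ s ω) (t : ℝ) * jump (fun s => ξ s ω) (t : ℝ))

/-- Pathwise payoff accumulated strictly before the random time `b`. -/
def payoffBefore (f g h : ℝ → Ω → ℝ) (b : Ω → ℝ) (ξ ζ : ℝ → Ω → ℝ) (ω : Ω) : ℝ :=
  (∫ t in Ico 0 (b ω), f t ω * (1 - ζ t ω) ∂pathMeasure (fun s => ξ s ω)) +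
    (∫ t in Ico 0 (b ω), g t ω * (1 - ξ t ω) ∂pathMeasure (fun s => ζ s ω)) +
    ∑' t : (Ico (0:ℝ) (b ω) : Set ℝ),
      h (t : ℝ) ω * (jump (fun s => ξ s ω) (t : ℝ) * jump (fun s => ζ s ω) (t : ℝ))

/-- The conditional payoff `J^Π(ξ, ζ | m)` of the game started at `θ`. -/
def J (μ : Measure Ω) (f g h : ℝ → Ω → ℝ) (T : ℝ) (θ : Ω → ℝ) (dPi : Ω → ℝ)
    (m : MeasurableSpace Ω) (ξ ζ : ℝ → Ω → ℝ) : Ω → ℝ :=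
  μ[fun ω => dPi ω * payoffFrom f g h T θ ξ ζ ω | m]

/-- The density `Π^{*,1}_θ` (resp. `Π^{*,2}_γ`), with value `1` whenever the
conditional-expectation denominator vanishes (convention `0/0 = 1`). -/
def piDensity (μ : Measure Ω) (𝒢 : Filtration ℝ mΩ) (ζ : ℝ → Ω → ℝ) (θ : Ω → ℝ) : Ω → ℝ :=
  fun ω =>
    if (μ[fun ω' => 1 - preVal ζ θ ω' | sigmaAt 𝒢 θ]) ω = 0 then 1
    else (1 - preVal ζ θ ω) / (μ[fun ω' => 1 - preVal ζ θ ω' | sigmaAt 𝒢 θ]) ω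

/-- Truncated control at the random time `η` (convention `0/0 = 1`). -/
def truncAt (ξ : ℝ → Ω → ℝ) (η : Ω → ℝ) : ℝ → Ω → ℝ := fun t ω =>
  if η ω ≤ t then
    (if preVal ξ η ω = 1 then 1 else (ξ t ω - preVal ξ η ω) / (1 - preVal ξ η ω))
  else 0

/-- `Y` is the essential infimum of the family `X i` under `μ`. -/
def IsEssInfFam (μ : Measure Ω) {ι : Sort*} (X : ι → Ω → ℝ) (Y : Ω → ℝ) : Prop :=
  (∀ i, ∀ᵐ ω ∂μ, Y ω ≤ X i ω) ∧
    ∀ Z : Ω → ℝ, (∀ i, ∀ᵐ ω ∂μ, Z ω ≤ X i ω) → ∀ᵐ ω ∂μ, Z ω ≤ Y ω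

/-- `Y` is the essential supremum of the family `X i` under `μ`. -/
def IsEssSupFam (μ : Measure Ω) {ι : Sort*} (X : ι → Ω → ℝ) (Y : Ω → ℝ) : Prop :=
  (∀ i, ∀ᵐ ω ∂μ, X i ω ≤ Y ω) ∧
    ∀ Z : Ω → ℝ, (∀ i, ∀ᵐ ω ∂μ, X i ω ≤ Z ω) → ∀ᵐ ω ∂μ, Y ω ≤ Z ω

/-- Standing assumptions on the payoff processes (without the order `f ≥ h ≥ g`). -/
structure PayoffBasic (μ : Measure Ω) (𝔽 : Filtration ℝ mΩ) (T : ℝ)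
    (f g h : ℝ → Ω → ℝ) : Prop where
  cadlag_f : Cadlag f
  cadlag_g : Cadlag g
  cadlag_h : Cadlag h
  meas_f : Measurable (uncurry f)
  meas_g : Measurable (uncurry g)
  meas_h : Measurable (uncurry h)
  adapted_f : Adapted 𝔽 f
  adapted_g : Adapted 𝔽 g
  adapted_h : Adapted 𝔽 h
  int_sup : Integrable (fun ω => ⨆ t : Icc (0:ℝ) T, (|f (t : ℝ) ω| + |g (t : ℝ) ω| + |h (t : ℝ) ω|)) μ

/-- Standing assumptions on the payoff processes, including `f ≥ h ≥ g`. -/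
structure PayoffAssumptions (μ : Measure Ω) (𝔽 : Filtration ℝ mΩ) (T : ℝ)
    (f g h : ℝ → Ω → ℝ) extends PayoffBasic μ 𝔽 T f g h : Prop where
  order_ghf : ∀ᵐ ω ∂μ, ∀ t ∈ Icc (0:ℝ) T, g t ω ≤ h t ω ∧ h t ω ≤ f t ω

/-- `(ξ*, ζ*)` generate a saddle point of the game (expected payoffs written in terms of
generating processes, cf. equation (2.3) of the paper). -/
structure IsSaddle (μ : Measure Ω) (f g h : ℝ → Ω → ℝ) (T : ℝ)
    (𝒢1 𝒢2 : Filtration ℝ mΩ) (ξs ζs : ℝ → Ω → ℝ) : Prop where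
  gen1 : IsGen 𝒢1 T (fun _ => 0) ξs
  gen2 : IsGen 𝒢2 T (fun _ => 0) ζs
  minOpt : ∀ ξ, IsGen 𝒢1 T (fun _ => 0) ξ →
    (∫ ω, payoffFrom f g h T (fun _ => 0) ξs ζs ω ∂μ) ≤
      ∫ ω, payoffFrom f g h T (fun _ => 0) ξ ζs ω ∂μ
  maxOpt : ∀ ζ, IsGen 𝒢2 T (fun _ => 0) ζ →
    (∫ ω, payoffFrom f g h T (fun _ => 0) ξs ζ ω ∂μ) ≤
      ∫ ω, payoffFrom f g h T (fun _ => 0) ξs ζs ω ∂μ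

/-- A `𝒯₀(𝒢)`-system: each member is `𝒢_θ`-measurable and the family is consistent. -/
def IsT0System (μ : Measure Ω) (𝒢 : Filtration ℝ mΩ) (T : ℝ)
    (X : (Ω → ℝ) → Ω → ℝ) : Prop :=
  (∀ θ ∈ T0 𝒢 T, AEStronglyMeasurable[sigmaAt 𝒢 θ] (X θ) μ) ∧
    ∀ θ₁ ∈ T0 𝒢 T, ∀ θ₂ ∈ T0 𝒢 T, ∀ᵐ ω ∂μ, θ₁ ω = θ₂ ω → X θ₁ ω = X θ₂ ω

/-- A `𝒯₀(𝒢)`-submartingale system. -/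
def IsSubmartSystem (μ : Measure Ω) (𝒢 : Filtration ℝ mΩ) (T : ℝ)
    (X : (Ω → ℝ) → Ω → ℝ) : Prop :=
  IsT0System μ 𝒢 T X ∧ (∀ θ ∈ T0 𝒢 T, Integrable (X θ) μ) ∧
    ∀ θ₁ ∈ T0 𝒢 T, ∀ θ₂ ∈ T0 𝒢 T, (∀ ω, θ₁ ω ≤ θ₂ ω) →
      ∀ᵐ ω ∂μ, X θ₁ ω ≤ (μ[X θ₂ | sigmaAt 𝒢 θ₁]) ω

/-- A `𝒯₀(𝒢)`-supermartingale system. -/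
def IsSupermartSystem (μ : Measure Ω) (𝒢 : Filtration ℝ mΩ) (T : ℝ)
    (X : (Ω → ℝ) → Ω → ℝ) : Prop :=
  IsT0System μ 𝒢 T X ∧ (∀ θ ∈ T0 𝒢 T, Integrable (X θ) μ) ∧
    ∀ θ₁ ∈ T0 𝒢 T, ∀ θ₂ ∈ T0 𝒢 T, (∀ ω, θ₁ ω ≤ θ₂ ω) →
      ∀ᵐ ω ∂μ, (μ[X θ₂ | sigmaAt 𝒢 θ₁]) ω ≤ X θ₁ ω

/-- A `𝒯₀(𝒢)`-martingale system. -/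
def IsMartSystem (μ : Measure Ω) (𝒢 : Filtration ℝ mΩ) (T : ℝ)
    (X : (Ω → ℝ) → Ω → ℝ) : Prop :=
  IsT0System μ 𝒢 T X ∧ (∀ θ ∈ T0 𝒢 T, Integrable (X θ) μ) ∧
    ∀ θ₁ ∈ T0 𝒢 T, ∀ θ₂ ∈ T0 𝒢 T, (∀ ω, θ₁ ω ≤ θ₂ ω) →
      (μ[X θ₂ | sigmaAt 𝒢 θ₁]) =ᵐ[μ] X θ₁

/-- Uniform integrability (class (D)) of a family of random variables. -/
def ClassDFam (μ : Measure Ω) {ι : Sort*} (X : ι → Ω → ℝ) : Prop :=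
  ∀ ε : ℝ, 0 < ε → ∃ C : ℝ, ∀ i, (∫ ω in {ω | C ≤ |X i ω|}, |X i ω| ∂μ) ≤ ε

/-- The process `M` aggregates the family `X` indexed by stopping times in `𝒯₀(𝒢)`. -/
def Aggregates (μ : Measure Ω) (𝒢 : Filtration ℝ mΩ) (T : ℝ)
    (M : ℝ → Ω → ℝ) (X : (Ω → ℝ) → Ω → ℝ) : Prop :=
  ∀ θ ∈ T0 𝒢 T, (fun ω => M (θ ω) ω) =ᵐ[μ] X θ

/-- Right-continuity in expectation of a family indexed by stopping times. -/
def RCinExp (μ : Measure Ω) (𝒢 : Filtration ℝ mΩ) (T : ℝ)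
    (X : (Ω → ℝ) → Ω → ℝ) : Prop :=
  ∀ θ ∈ T0 𝒢 T, ∀ θseq : ℕ → Ω → ℝ, (∀ n, θseq n ∈ T0 𝒢 T) →
    (∀ ω, Antitone fun n => θseq n ω) →
    (∀ ω, Tendsto (fun n => θseq n ω) atTop (nhds (θ ω))) →
    Tendsto (fun n => ∫ ω, X (θseq n) ω ∂μ) atTop (nhds (∫ ω, X θ ω ∂μ))

/-- A previsible (predictable) stopping time: one admitting an announcing sequence. -/
def IsPredictableTime (𝒢 : Filtration ℝ mΩ) (θ : Ω → ℝ) : Prop :=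
  ∃ a : ℕ → Ω → ℝ, (∀ n, IsStoppingTime 𝒢 (fun ω => (a n ω : WithTop ℝ))) ∧
    (∀ ω, StrictMono fun n => a n ω) ∧ (∀ n ω, a n ω < θ ω) ∧
    ∀ ω, Tendsto (fun n => a n ω) atTop (nhds (θ ω))

/-- `Y` is the `𝒢`-optional projection of `X` under `μ` (characterised at stopping times;
optionality is encoded by progressive measurability). -/
def IsOptionalProj (μ : Measure Ω) (𝒢 : Filtration ℝ mΩ) (T : ℝ)
    (X Y : ℝ → Ω → ℝ) : Prop :=
  ProgMeasurable 𝒢 Y ∧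
    ∀ τ ∈ T0 𝒢 T, (fun ω => Y (τ ω) ω) =ᵐ[μ] μ[fun ω => X (τ ω) ω | sigmaAt 𝒢 τ]

/-- The family `M⁰(θ)`. -/
def M0fam (μ : Measure Ω) (𝒢1 : Filtration ℝ mΩ) (g : ℝ → Ω → ℝ) (ζs : ℝ → Ω → ℝ)
    (V1 : (Ω → ℝ) → Ω → ℝ) (θ : Ω → ℝ) : Ω → ℝ := fun ω =>
  (μ[fun ω' => ∫ t in Ico 0 (θ ω'), g t ω' ∂pathMeasure (fun s => ζs s ω') | sigmaAt 𝒢1 θ]) ω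
    + (μ[fun ω' => 1 - preVal ζs θ ω' | sigmaAt 𝒢1 θ]) ω * V1 θ ω

/-- The family `N⁰(γ)`. -/
def N0fam (μ : Measure Ω) (𝒢2 : Filtration ℝ mΩ) (f : ℝ → Ω → ℝ) (ξs : ℝ → Ω → ℝ)
    (V2 : (Ω → ℝ) → Ω → ℝ) (γ : Ω → ℝ) : Ω → ℝ := fun ω =>
  (μ[fun ω' => ∫ t in Ico 0 (γ ω'), f t ω' ∂pathMeasure (fun s => ξs s ω') | sigmaAt 𝒢2 γ]) ω
    + (μ[fun ω' => 1 - preVal ξs γ ω' | sigmaAt 𝒢2 γ]) ω * V2 γ ω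

/-- The family `M^ξ(θ)`. -/
def MxiFam (μ : Measure Ω) (𝒢1 : Filtration ℝ mΩ) (f g h : ℝ → Ω → ℝ)
    (ζs : ℝ → Ω → ℝ) (V1 : (Ω → ℝ) → Ω → ℝ) (ξ : ℝ → Ω → ℝ) (θ : Ω → ℝ) : Ω → ℝ :=
  fun ω =>
    (μ[fun ω' => payoffBefore f g h θ ξ ζs ω' | sigmaAt 𝒢1 θ]) ω
      + (1 - preVal ξ θ ω) *
          ((μ[fun ω' => 1 - preVal ζs θ ω' | sigmaAt 𝒢1 θ]) ω * V1 θ ω)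

/-- The family `N^ζ(γ)`. -/
def NzetaFam (μ : Measure Ω) (𝒢2 : Filtration ℝ mΩ) (f g h : ℝ → Ω → ℝ)
    (ξs : ℝ → Ω → ℝ) (V2 : (Ω → ℝ) → Ω → ℝ) (ζ : ℝ → Ω → ℝ) (γ : Ω → ℝ) : Ω → ℝ :=
  fun ω =>
    (μ[fun ω' => payoffBefore f g h γ ξs ζ ω' | sigmaAt 𝒢2 γ]) ω
      + (1 - preVal ζ γ ω) *
          ((μ[fun ω' => 1 - preVal ξs γ ω' | sigmaAt 𝒢2 γ]) ω * V2 γ ω)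

/-- The payoff `f_τ(1-ζ_τ) + ∫_{[a,τ)} g dζ + h_τ Δζ_τ` used for Player 1's stopping problem. -/
def stopPayoff1 (f g h : ℝ → Ω → ℝ) (ζ : ℝ → Ω → ℝ) (a τ : Ω → ℝ) (ω : Ω) : ℝ :=
  f (τ ω) ω * (1 - ζ (τ ω) ω)
    + (∫ u in Ico (a ω) (τ ω), g u ω ∂pathMeasure (fun s => ζ s ω))
    + h (τ ω) ω * jump (fun s => ζ s ω) (τ ω)

/-- The payoff `g_σ(1-ξ_σ) + ∫_{[a,σ)} f dξ + h_σ Δξ_σ` used for Player 2's stopping problem. -/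
def stopPayoff2 (f g h : ℝ → Ω → ℝ) (ξ : ℝ → Ω → ℝ) (a σ : Ω → ℝ) (ω : Ω) : ℝ :=
  g (σ ω) ω * (1 - ξ (σ ω) ω)
    + (∫ u in Ico (a ω) (σ ω), f u ω ∂pathMeasure (fun s => ξ s ω))
    + h (σ ω) ω * jump (fun s => ξ s ω) (σ ω)

/-- `τ*(z) = inf{t ∈ [0,T] : ξ_t > z}` (equal `T` when the set is empty). -/
def levelTime (ξ : ℝ → Ω → ℝ) (T : ℝ) (z : ℝ) (ω : Ω) : ℝ :=
  sInf ({t | t ∈ Icc 0 T ∧ z < ξ t ω} ∪ {T})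

/-- The common filtration `t ↦ 𝒢1_t ⊓ 𝒢2_t`. -/
def commonFiltration (𝒢1 𝒢2 : Filtration ℝ mΩ) : Filtration ℝ mΩ where
  seq t := 𝒢1 t ⊓ 𝒢2 t
  mono' := fun _ _ hij =>
    le_inf (inf_le_left.trans (𝒢1.mono hij)) (inf_le_right.trans (𝒢2.mono hij))
  le' t := inf_le_left.trans (𝒢1.le t)

/-- Two processes are indistinguishable on `[0,T]`. -/
def IndistOn (μ : Measure Ω) (T : ℝ) (M M' : ℝ → Ω → ℝ) : Prop :=
  ∀ᵐ ω ∂μ, ∀ t ∈ Icc (0:ℝ) T, M t ω = M' t ω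


open scoped Topology ENNReal NNReal

section AuxCondExpMod

/-- A measurable function agreeing with the limit of a sequence of measurable functions
wherever the limit exists. -/
lemma exists_measLimit {β : Type*} {m : MeasurableSpace β} (f : ℕ → β → ℝ)
    (hf : ∀ n, Measurable (f n)) :
    ∃ g : β → ℝ, Measurable g ∧
      ∀ x c, Tendsto (fun n => f n x) atTop (𝓝 c) → g x = c := by
  have hA : MeasurableSet {x | ∃ c, Tendsto (fun n => f n x) atTop (𝓝 c)} :=
    measurableSet_exists_tendsto hf
  set A := {x | ∃ c, Tendsto (fun n => f n x) atTop (𝓝 c)} with hAdef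
  set f' : ℕ → β → ℝ := fun n => A.indicator (f n) with hf'def
  have hf' : ∀ n, Measurable (f' n) := fun n => (hf n).indicator hA
  have hconv : ∀ x, ∃ c, Tendsto (fun n => f' n x) atTop (𝓝 c) := by
    intro x
    by_cases hx : x ∈ A
    · obtain ⟨c, hc⟩ := id hx
      refine ⟨c, ?_⟩
      have : (fun n => f' n x) = fun n => f n x := by
        funext n; exact Set.indicator_of_mem hx (f n)
      rw [this]; exact hc
    · refine ⟨0, ?_⟩
      have : (fun n => f' n x) = fun _ => (0:ℝ) := by
        funext n; exact Set.indicator_of_notMem hx (f n)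
      rw [this]; exact tendsto_const_nhds
  set g : β → ℝ := fun x => limUnder atTop (fun n => f' n x) with hgdef
  have hg : ∀ x, Tendsto (fun n => f' n x) atTop (𝓝 (g x)) := fun x =>
    tendsto_nhds_limUnder (hconv x)
  refine ⟨g, measurable_of_tendsto_metrizable hf' (tendsto_pi_nhds.2 hg), ?_⟩
  intro x c hc
  have hx : x ∈ A := ⟨c, hc⟩
  have heq : (fun n => f' n x) = fun n => f n x := by
    funext n; exact Set.indicator_of_mem hx (f n)
  exact tendsto_nhds_unique (heq ▸ hg x) hc

/-- Composition with a countable-range measurable function preserves joint measurability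
with respect to the product σ-algebra with a sub-σ-algebra in the second factor. -/
lemma measurable_comp_countable_range {Ω : Type*} (G : MeasurableSpace Ω) (g : ℝ → ℝ)
    (hg : Measurable g) (hcount : (Set.range g).Countable)
    (φ : ℝ → Ω → ℝ) (hφ : ∀ q, Measurable[G] (φ q)) :
    Measurable[MeasurableSpace.prod (inferInstance : MeasurableSpace ℝ) G]
      (fun p : ℝ × Ω => φ (g p.1) p.2) := by
  intro s hs
  have heq : (fun p : ℝ × Ω => φ (g p.1) p.2) ⁻¹' s =
      ⋃ q ∈ Set.range g, (g ⁻¹' {q}) ×ˢ (φ q ⁻¹' s) := by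
    ext p
    simp only [Set.mem_preimage, Set.mem_iUnion, Set.mem_prod, Set.mem_range,
      Set.mem_singleton_iff]
    constructor
    · intro h; exact ⟨g p.1, ⟨p.1, rfl⟩, rfl, h⟩
    · rintro ⟨q, _, hq, h⟩; rw [hq]; exact h
  rw [heq]
  exact MeasurableSet.biUnion hcount fun q _ =>
    @MeasurableSet.prod ℝ Ω _ G _ _ (hg (measurableSet_singleton q)) (hφ q hs)

/-- Almost-everywhere conditional dominated convergence theorem. -/
lemma condDCT {Ω : Type*} {mΩ : MeasurableSpace Ω} (μ : Measure Ω) [IsProbabilityMeasure μ]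
    (G : MeasurableSpace Ω) (hG : G ≤ mΩ)
    (f : ℕ → Ω → ℝ) (F S : Ω → ℝ)
    (hf : ∀ n, Measurable[mΩ] (f n)) (hF : Measurable[mΩ] F) (hSint : Integrable S μ)
    (hbound : ∀ n ω, |f n ω| ≤ S ω)
    (hlim : ∀ ω, Tendsto (fun n => f n ω) atTop (𝓝 (F ω))) :
    ∀ᵐ ω ∂μ, Tendsto (fun n => (μ[f n|G]) ω) atTop (𝓝 ((μ[F|G]) ω)) := by
  letI : MeasurableSpace Ω := mΩ
  haveI : SigmaFinite (μ.trim hG) := inferInstance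
  have hSnn : ∀ ω, 0 ≤ S ω := fun ω => (abs_nonneg _).trans (hbound 0 ω)
  have hFS : ∀ ω, |F ω| ≤ S ω := fun ω =>
    le_of_tendsto ((continuous_abs.tendsto _).comp (hlim ω))
      (Eventually.of_forall fun n => hbound n ω)
  have hfint : ∀ n, Integrable (f n) μ := fun n =>
    Integrable.mono' hSint (hf n).aestronglyMeasurable
      (Eventually.of_forall fun ω => by simpa [Real.norm_eq_abs] using hbound n ω)
  have hFint : Integrable F μ :=
    Integrable.mono' hSint hF.aestronglyMeasurable
      (Eventually.of_forall fun ω => by simpa [Real.norm_eq_abs] using hFS ω)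
  -- the pointwise suprema of tails
  set Gk : ℕ → Ω → ℝ≥0∞ := fun k ω => ⨆ m, (‖f (k + m) ω - F ω‖₊ : ℝ≥0∞) with hGkdef
  have hGkmeas : ∀ k, Measurable[mΩ] (Gk k) := fun k =>
    Measurable.iSup fun m => ((hf (k + m)).sub hF).nnnorm.coe_nnreal_ennreal
  have hGk_le : ∀ k ω, Gk k ω ≤ ENNReal.ofReal (2 * S ω) := by
    intro k ω
    refine iSup_le fun m => ?_
    rw [← enorm_eq_nnnorm, ← ofReal_norm]
    refine ENNReal.ofReal_le_ofReal ?_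
    calc ‖f (k + m) ω - F ω‖ ≤ |f (k + m) ω| + |F ω| := norm_sub_le _ _
      _ ≤ S ω + S ω := add_le_add (hbound _ ω) (hFS ω)
      _ = 2 * S ω := by ring
  have hGk_ne_top : ∀ k ω, Gk k ω ≠ ∞ := fun k ω =>
    ((hGk_le k ω).trans_lt ENNReal.ofReal_lt_top).ne
  set g : ℕ → Ω → ℝ := fun k ω => (Gk k ω).toReal with hgdef
  have hgmeas : ∀ k, Measurable[mΩ] (g k) := fun k => (hGkmeas k).ennreal_toReal
  have hgnn : ∀ k ω, 0 ≤ g k ω := fun k ω => ENNReal.toReal_nonneg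
  have hg_le : ∀ k ω, g k ω ≤ 2 * S ω := fun k ω =>
    ENNReal.toReal_le_of_le_ofReal (by linarith [hSnn ω]) (hGk_le k ω)
  have hgint : ∀ k, Integrable (g k) μ := fun k =>
    Integrable.mono' (hSint.const_mul 2) (hgmeas k).aestronglyMeasurable
      (Eventually.of_forall fun ω => by
        simpa [Real.norm_eq_abs, abs_of_nonneg (hgnn k ω)] using hg_le k ω)
  have hgm : ∀ k n, k ≤ n → ∀ ω, |f n ω - F ω| ≤ g k ω := by
    intro k n hkn ω
    have h1 : (‖f n ω - F ω‖₊ : ℝ≥0∞) ≤ Gk k ω := by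
      have : n = k + (n - k) := by omega
      rw [this]
      exact le_iSup (fun m => (‖f (k + m) ω - F ω‖₊ : ℝ≥0∞)) (n - k)
    have := ENNReal.toReal_mono (hGk_ne_top k ω) h1
    simpa [Real.norm_eq_abs] using this
  have hganti : ∀ ω, Antitone fun k => g k ω := by
    intro ω
    refine antitone_nat_of_succ_le fun k => ?_
    refine ENNReal.toReal_mono (hGk_ne_top k ω) ?_
    refine iSup_le fun m => ?_
    have : k + 1 + m = k + (1 + m) := by omega
    rw [this]
    exact le_iSup (fun m => (‖f (k + m) ω - F ω‖₊ : ℝ≥0∞)) (1 + m)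
  have hgzero : ∀ ω, Tendsto (fun k => g k ω) atTop (𝓝 0) := by
    intro ω
    rw [Metric.tendsto_atTop]
    intro ε hε
    obtain ⟨N, hN⟩ := (Metric.tendsto_atTop.1 (hlim ω)) (ε / 2) (by linarith)
    refine ⟨N, fun k hk => ?_⟩
    have hGle : Gk k ω ≤ ENNReal.ofReal (ε / 2) := by
      refine iSup_le fun m => ?_
      rw [← enorm_eq_nnnorm, ← ofReal_norm]
      refine ENNReal.ofReal_le_ofReal ?_
      have := hN (k + m) (le_trans hk (Nat.le_add_right _ _))
      rw [Real.dist_eq] at this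
      simpa [Real.norm_eq_abs] using this.le
    have : g k ω ≤ ε / 2 :=
      ENNReal.toReal_le_of_le_ofReal (by linarith) hGle
    rw [Real.dist_eq]
    rw [abs_of_nonneg (by simpa using hgnn k ω)]
    simpa using lt_of_le_of_lt this (by linarith)
  -- conditional expectations of the tails
  set h : ℕ → Ω → ℝ := fun k => μ[g k|G] with hhdef
  have hhnn : ∀ k, 0 ≤ᵐ[μ] h k := fun k =>
    condExp_nonneg (Eventually.of_forall (hgnn k))
  have hhanti : ∀ k, h (k + 1) ≤ᵐ[μ] h k := fun k =>
    condExp_mono (hgint (k + 1)) (hgint k)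
      (Eventually.of_forall fun ω => hganti ω (Nat.le_succ k))
  have hhint : ∀ k, Integrable (h k) μ := fun k => integrable_condExp
  have hhmeas : ∀ k, Measurable[mΩ] (h k) := fun k =>
    (stronglyMeasurable_condExp.mono hG).measurable
  have hint_h : ∀ k, ∫ ω, h k ω ∂μ = ∫ ω, g k ω ∂μ := fun k => integral_condExp hG
  have hint_g_zero : Tendsto (fun k => ∫ ω, g k ω ∂μ) atTop (𝓝 0) := by
    have := tendsto_integral_of_dominated_convergence (fun ω => 2 * S ω)
      (fun k => (hgmeas k).aestronglyMeasurable) (hSint.const_mul 2)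
      (fun k => Eventually.of_forall fun ω => by
        simpa [Real.norm_eq_abs, abs_of_nonneg (hgnn k ω)] using hg_le k ω)
      (Eventually.of_forall hgzero)
    simpa using this
  -- measurable a.e. limit of the h k
  obtain ⟨H, hHmeas, hHprop⟩ := exists_measLimit (m := mΩ) h hhmeas
  have haegood : ∀ᵐ ω ∂μ, (∀ k, 0 ≤ h k ω) ∧ (∀ k, h (k + 1) ω ≤ h k ω) := by
    refine ((ae_all_iff.2 hhnn).and (ae_all_iff.2 hhanti)).mono ?_
    intro ω hω; exact ⟨hω.1, hω.2⟩
  have hh_tendsto : ∀ᵐ ω ∂μ, Tendsto (fun k => h k ω) atTop (𝓝 (H ω)) := by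
    refine haegood.mono fun ω hω => ?_
    have hanti : Antitone fun k => h k ω := antitone_nat_of_succ_le hω.2
    have hbdd : BddBelow (Set.range fun k => h k ω) :=
      ⟨0, by rintro x ⟨k, rfl⟩; exact hω.1 k⟩
    have := tendsto_atTop_ciInf hanti hbdd
    rw [hHprop ω _ this]
    exact this
  have hint_H : Tendsto (fun k => ∫ ω, h k ω ∂μ) atTop (𝓝 (∫ ω, H ω ∂μ)) := by
    refine tendsto_integral_of_dominated_convergence (fun ω => |h 0 ω|)
      (fun k => (hhmeas k).aestronglyMeasurable) (hhint 0).abs ?_ hh_tendsto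
    intro k
    refine haegood.mono fun ω hω => ?_
    have hanti2 : Antitone fun k => h k ω := antitone_nat_of_succ_le hω.2
    have hle : h k ω ≤ h 0 ω := hanti2 (Nat.zero_le k)
    rw [Real.norm_eq_abs, abs_of_nonneg (hω.1 k)]
    exact hle.trans (le_abs_self _)
  have hintH0 : ∫ ω, H ω ∂μ = 0 := by
    have h1 : Tendsto (fun k => ∫ ω, h k ω ∂μ) atTop (𝓝 0) := by
      simpa [hint_h] using hint_g_zero
    exact tendsto_nhds_unique hint_H h1
  have hHnn : 0 ≤ᵐ[μ] H := by
    refine (hh_tendsto.and haegood).mono fun ω hω => ?_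
    exact ge_of_tendsto' hω.1 hω.2.1
  have hHle : ∀ᵐ ω ∂μ, ‖H ω‖ ≤ |h 0 ω| := by
    refine (hh_tendsto.and haegood).mono fun ω hω => ?_
    have hanti : Antitone fun k => h k ω := antitone_nat_of_succ_le hω.2.2
    have h1 : H ω ≤ h 0 ω := le_of_tendsto hω.1
      (Eventually.of_forall fun k => hanti (Nat.zero_le k))
    have h2 : 0 ≤ H ω := ge_of_tendsto' hω.1 hω.2.1
    rw [Real.norm_eq_abs, abs_of_nonneg h2]
    exact h1.trans (le_abs_self _)
  have hHint : Integrable H μ :=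
    Integrable.mono' (hhint 0).abs hHmeas.aestronglyMeasurable hHle
  have hH0 : H =ᵐ[μ] 0 := (integral_eq_zero_iff_of_nonneg_ae hHnn hHint).1 hintH0
  -- the key chain of inequalities
  have hchain : ∀ k n, k ≤ n →
      ∀ᵐ ω ∂μ, |(μ[f n|G]) ω - (μ[F|G]) ω| ≤ h k ω := by
    intro k n hkn
    have hsubint : Integrable (f n - F) μ := (hfint n).sub hFint
    have habsint : Integrable (fun ω => |f n ω - F ω|) μ := hsubint.abs
    have h1 := condExp_sub (μ := μ) (m := G) (hfint n) hFint
    have h2 : μ[f n - F|G] ≤ᵐ[μ] μ[(fun ω => |f n ω - F ω|)|G] :=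
      condExp_mono hsubint habsint (Eventually.of_forall fun ω => le_abs_self _)
    have h3 : μ[-(f n - F)|G] ≤ᵐ[μ] μ[(fun ω => |f n ω - F ω|)|G] :=
      condExp_mono hsubint.neg habsint (Eventually.of_forall fun ω => by
        simpa using neg_le_abs (f n ω - F ω))
    have h3' := condExp_neg (μ := μ) (m := G) (f n - F)
    have h4 : μ[(fun ω => |f n ω - F ω|)|G] ≤ᵐ[μ] h k :=
      condExp_mono habsint (hgint k) (Eventually.of_forall fun ω => hgm k n hkn ω)
    filter_upwards [h1, h2, h3, h3', h4] with ω e1 e2 e3 e3' e4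
    have e1' : (μ[f n - F|G]) ω = (μ[f n|G]) ω - (μ[F|G]) ω := by
      rw [e1]; simp
    rw [e3'] at e3
    have : |(μ[f n - F|G]) ω| ≤ (μ[(fun ω => |f n ω - F ω|)|G]) ω := by
      rw [abs_le]
      constructor
      · have : -(μ[f n - F|G]) ω ≤ (μ[(fun ω => |f n ω - F ω|)|G]) ω := by
          simpa using e3
        linarith
      · exact e2
    rw [e1'] at this
    exact this.trans e4
  have hchain' : ∀ᵐ ω ∂μ, ∀ k n, k ≤ n →
      |(μ[f n|G]) ω - (μ[F|G]) ω| ≤ h k ω := by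
    rw [ae_all_iff]
    intro k
    rw [ae_all_iff]
    intro n
    by_cases hkn : k ≤ n
    · exact (hchain k n hkn).mono fun ω hω _ => hω
    · exact Eventually.of_forall fun ω h => absurd h hkn
  filter_upwards [hchain', hh_tendsto, hH0, haegood] with ω hc ht h0 hgd
  rw [Metric.tendsto_atTop]
  intro ε hε
  have ht0 : Tendsto (fun k => h k ω) atTop (𝓝 0) := by
    rw [h0] at ht; exact ht
  obtain ⟨K, hK⟩ := (Metric.tendsto_atTop.1 ht0) ε hε
  refine ⟨K, fun n hn => ?_⟩
  have h1 : |(μ[f n|G]) ω - (μ[F|G]) ω| ≤ h K ω := hc K n hn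
  have h2 : h K ω < ε := by
    have := hK K le_rfl
    rw [Real.dist_eq, sub_zero, abs_of_nonneg (hgd.1 K)] at this
    exact this
  rw [Real.dist_eq]
  exact lt_of_le_of_lt h1 h2

/-- Truncation of a real number to `[-M, M]`. -/
def truncR (M : ℕ) (x : ℝ) : ℝ := max (-(M:ℝ)) (min (M:ℝ) x)

lemma truncR_continuous (M : ℕ) : Continuous (truncR M) :=
  continuous_const.max (continuous_const.min continuous_id)

lemma truncR_abs_le_coe (M : ℕ) (x : ℝ) : |truncR M x| ≤ (M:ℝ) := by
  rw [abs_le, truncR]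
  constructor
  · exact le_max_left _ _
  · exact max_le (by simp) (min_le_left _ _)

lemma truncR_abs_le (M : ℕ) (x : ℝ) : |truncR M x| ≤ |x| := by
  rcases le_or_gt 0 x with hx | hx
  · have h1 : truncR M x ≤ x := max_le (le_trans (by simp) hx) (min_le_right _ _)
    have h2 : 0 ≤ truncR M x := le_max_of_le_right (le_min (by simp) hx)
    rw [abs_of_nonneg h2, abs_of_nonneg hx]; exact h1
  · have h1 : min (M:ℝ) x = x := min_eq_right (le_trans hx.le (by simp))
    have h2 : x ≤ truncR M x := by rw [truncR, h1]; exact le_max_right _ _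
    have h3 : truncR M x ≤ 0 := by
      rw [truncR, h1]; exact max_le (by simp) hx.le
    rw [abs_of_nonpos h3, abs_of_nonpos hx.le]; linarith
  
lemma truncR_tendsto (x : ℝ) : Tendsto (fun M : ℕ => truncR M x) atTop (𝓝 x) := by
  have hconst : ∀ M : ℕ, (|x| ≤ (M:ℝ)) → truncR M x = x := by
    intro M hM
    have h1 : min (M:ℝ) x = x := min_eq_right (le_trans (le_abs_self x) hM)
    have h2 : -(M:ℝ) ≤ x := by
      have := neg_abs_le x
      linarith
    rw [truncR, h1, max_eq_right h2]
  have : ∀ᶠ M : ℕ in atTop, truncR M x = x := by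
    filter_upwards [eventually_ge_atTop ⌈|x|⌉₊] with M hM
    exact hconst M (le_trans (Nat.le_ceil _) (by exact_mod_cast hM))
  exact Tendsto.congr' (this.mono fun M h => h.symm) tendsto_const_nhds

/-- The key construction: existence of the jointly measurable modification, given
a measurable countable-range approximation scheme converging pointwise. -/
lemma key_modification {Ω : Type*} {mΩ : MeasurableSpace Ω} (μ : Measure Ω)
    [IsProbabilityMeasure μ]
    (G : MeasurableSpace Ω) (hG : G ≤ mΩ)
    (X : ℝ → Ω → ℝ)
    (hXmeas : Measurable[MeasurableSpace.prod (inferInstance : MeasurableSpace ℝ) mΩ]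
      (uncurry X))
    (approx : ℕ → ℝ → ℝ)
    (happrox_meas : ∀ n, Measurable (approx n))
    (happrox_count : ∀ n, (Set.range (approx n)).Countable)
    (happrox_lim : ∀ z ∈ Icc (0:ℝ) 1, ∀ ω,
      Tendsto (fun n => X (approx n z) ω) atTop (𝓝 (X z ω))) :
    ∃ Y : ℝ → Ω → ℝ,
      Measurable[MeasurableSpace.prod (inferInstance : MeasurableSpace ℝ) G]
        (fun p : ℝ × Ω => Y p.1 p.2) ∧
      ∀ z ∈ Icc (0:ℝ) 1, Y z =ᵐ[μ] μ[X z | G] := by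
  letI : MeasurableSpace Ω := mΩ
  haveI : SigmaFinite (μ.trim hG) := inferInstance
  have hprodle : (MeasurableSpace.prod (inferInstance : MeasurableSpace ℝ) G) ≤
      MeasurableSpace.prod (inferInstance : MeasurableSpace ℝ) mΩ :=
    sup_le_sup le_rfl (MeasurableSpace.comap_mono hG)
  have hXmeas' : Measurable[MeasurableSpace.prod (inferInstance : MeasurableSpace ℝ) mΩ]
      (uncurry X) := hXmeas
  have hXsec : ∀ q : ℝ, Measurable[mΩ] (X q) := fun q =>
    hXmeas'.comp measurable_prodMk_left
  -- conditional expectations of the truncations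
  set φ : ℕ → ℝ → Ω → ℝ := fun M q => μ[fun ω => truncR M (X q ω)|G] with hφdef
  have hφmeas : ∀ M q, Measurable[G] (φ M q) := fun M q =>
    stronglyMeasurable_condExp.measurable
  -- stage 1 : dyadic limits, jointly measurable
  have hF1meas : ∀ M n, Measurable[MeasurableSpace.prod
      (inferInstance : MeasurableSpace ℝ) G] (fun p : ℝ × Ω => φ M (approx n p.1) p.2) :=
    fun M n => measurable_comp_countable_range G (approx n) (happrox_meas n)
      (happrox_count n) (φ M) (hφmeas M)
  have hstage1 : ∀ M : ℕ, ∃ Y1 : ℝ × Ω → ℝ,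
      Measurable[MeasurableSpace.prod (inferInstance : MeasurableSpace ℝ) G] Y1 ∧
      ∀ p c, Tendsto (fun n => φ M (approx n p.1) p.2) atTop (𝓝 c) → Y1 p = c :=
    fun M => exists_measLimit (m := MeasurableSpace.prod
      (inferInstance : MeasurableSpace ℝ) G) _ (hF1meas M)
  choose Y1 hY1meas hY1 using hstage1
  -- stage 2 : limit in the truncation level
  obtain ⟨Y2, hY2meas, hY2⟩ := exists_measLimit
    (m := MeasurableSpace.prod (inferInstance : MeasurableSpace ℝ) G)
    (fun M => Y1 M) hY1meas
  -- the set of parameters with integrable section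
  set E : Set ℝ := {z | ∫⁻ ω, ‖X z ω‖₊ ∂μ < ∞} with hEdef
  have hEmeas : MeasurableSet E := by
    have h0 : Measurable (uncurry fun z ω => (‖X z ω‖₊ : ℝ≥0∞)) := by
      have h0' := hXmeas'.nnnorm.coe_nnreal_ennreal
      exact h0'
    have h1 : Measurable fun z => ∫⁻ ω, ‖X z ω‖₊ ∂μ :=
      Measurable.lintegral_prod_right h0
    exact measurableSet_lt h1 measurable_const
  have hfst : Measurable[MeasurableSpace.prod (inferInstance : MeasurableSpace ℝ) G]
      (Prod.fst : ℝ × Ω → ℝ) := @measurable_fst ℝ Ω _ G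
  refine ⟨fun z ω => (Prod.fst ⁻¹' E).indicator Y2 (z, ω), ?_, ?_⟩
  · exact hY2meas.indicator (hfst hEmeas)
  · intro z hz
    by_cases hzint : Integrable (X z) μ
    · -- z belongs to E
      have hzE : (z : ℝ) ∈ E := hzint.hasFiniteIntegral
      -- stage 1 identification, for every truncation level
      have hst1 : ∀ M : ℕ, ∀ᵐ ω ∂μ,
          Y1 M (z, ω) = (μ[fun ω' => truncR M (X z ω')|G]) ω := by
        intro M
        have hDCT := condDCT μ G hG (fun n ω => truncR M (X (approx n z) ω))
          (fun ω => truncR M (X z ω)) (fun _ => (M:ℝ))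
          (fun n => (truncR_continuous M).measurable.comp (hXsec (approx n z)))
          ((truncR_continuous M).measurable.comp (hXsec z))
          (integrable_const _)
          (fun n ω => truncR_abs_le_coe M _)
          (fun ω => ((truncR_continuous M).tendsto _).comp (happrox_lim z hz ω))
        refine hDCT.mono fun ω hω => ?_
        exact hY1 M (z, ω) _ hω
      -- stage 2 identification
      have hst2 : ∀ᵐ ω ∂μ,
          Tendsto (fun M => (μ[fun ω' => truncR M (X z ω')|G]) ω) atTop
            (𝓝 ((μ[X z|G]) ω)) := by
        refine condDCT μ G hG (fun M ω => truncR M (X z ω)) (X z)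
          (fun ω => |X z ω|)
          (fun M => (truncR_continuous M).measurable.comp (hXsec z)) (hXsec z)
          hzint.abs (fun M ω => truncR_abs_le M _) (fun ω => truncR_tendsto _)
      have hst1' : ∀ᵐ ω ∂μ, ∀ M : ℕ,
          Y1 M (z, ω) = (μ[fun ω' => truncR M (X z ω')|G]) ω := ae_all_iff.2 hst1
      filter_upwards [hst1', hst2] with ω h1 h2
      have htend : Tendsto (fun M => Y1 M (z, ω)) atTop (𝓝 ((μ[X z|G]) ω)) := by
        refine Tendsto.congr (fun M => (h1 M).symm) h2
      have : Y2 (z, ω) = (μ[X z|G]) ω := hY2 (z, ω) _ htend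
      show (Prod.fst ⁻¹' E).indicator Y2 (z, ω) = (μ[X z|G]) ω
      rw [Set.indicator_of_mem (by exact hzE : (z, ω) ∈ Prod.fst ⁻¹' E)]
      exact this
    · -- the conditional expectation is zero by convention
      have hcond : μ[X z|G] = 0 := condExp_of_not_integrable hzint
      have hzE : (z : ℝ) ∉ E := by
        intro hzE
        exact hzint ⟨Measurable.aestronglyMeasurable (hXsec z), hzE⟩
      refine Eventually.of_forall fun ω => ?_
      show (Prod.fst ⁻¹' E).indicator Y2 (z, ω) = (μ[X z|G]) ω
      rw [Set.indicator_of_notMem (by exact hzE : (z, ω) ∉ Prod.fst ⁻¹' E), hcond]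
      rfl

end AuxCondExpMod

/-- Lemma C.1 of the paper: a jointly measurable, one-sided-continuous
parametrised family of integrable random variables admits a jointly measurable
modification of its conditional expectations with respect to a complete sub-σ-algebra. -/
theorem measurable_modification_of_conditional_expectations
    {Ω : Type*} (G : MeasurableSpace Ω) {mΩ : MeasurableSpace Ω} (μ : Measure Ω) [IsProbabilityMeasure μ]
    (hG : G ≤ mΩ)
    (hGcomplete : ∀ s : Set Ω, μ s = 0 → MeasurableSet[G] s)
    (X : ℝ → Ω → ℝ)
    (hXmeas : Measurable (uncurry X))
    (hXcont :
      (∀ ω, ∀ z ∈ Icc (0:ℝ) 1, ContinuousWithinAt (fun z' => X z' ω) (Icc z 1) z) ∨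
      (∀ ω, ∀ z ∈ Icc (0:ℝ) 1, ContinuousWithinAt (fun z' => X z' ω) (Icc 0 z) z))
    (hXint : Integrable (fun ω => ⨆ z : Icc (0:ℝ) 1, |X (z : ℝ) ω|) μ) :
    ∃ Y : ℝ → Ω → ℝ,
      Measurable[MeasurableSpace.prod (inferInstance : MeasurableSpace ℝ) G]
        (fun p : ℝ × Ω => Y p.1 p.2) ∧
      ∀ z ∈ Icc (0:ℝ) 1, Y z =ᵐ[μ] μ[X z | G] := by
  have hhalf : Tendsto (fun n : ℕ => ((1:ℝ)/2) ^ n) atTop (𝓝 0) :=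
    tendsto_pow_atTop_nhds_zero_of_lt_one (by norm_num) (by norm_num)
  rcases hXcont with hR | hL
  · -- right-continuous case : dyadic approximation from above
    set approx : ℕ → ℝ → ℝ :=
      fun n z => min 1 ((⌈(2:ℝ)^n * z⌉ : ℝ) / 2^n) with happroxdef
    have happrox_meas : ∀ n, Measurable (approx n) := by
      intro n
      have h1 : Measurable fun z : ℝ => ⌈(2:ℝ)^n * z⌉ :=
        Int.measurable_ceil.comp (measurable_id.const_mul _)
      exact (measurable_from_top (f := fun k : ℤ => min 1 ((k:ℝ)/2^n))).comp h1
    have happrox_count : ∀ n, (Set.range (approx n)).Countable := by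
      intro n
      have : Set.range (approx n) ⊆
          Set.range (fun k : ℤ => min 1 ((k:ℝ)/2^n)) := by
        rintro x ⟨z, rfl⟩
        exact ⟨⌈(2:ℝ)^n * z⌉, rfl⟩
      exact (Set.countable_range _).mono this
    have hmem : ∀ n, ∀ z ∈ Icc (0:ℝ) 1, approx n z ∈ Icc z 1 := by
      intro n z hz
      constructor
      · refine le_min hz.2 ?_
        rw [le_div_iff₀ (by positivity)]
        calc z * 2^n = (2:ℝ)^n * z := by ring
          _ ≤ (⌈(2:ℝ)^n * z⌉ : ℝ) := Int.le_ceil _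
      · exact min_le_left _ _
    have htendsto : ∀ z ∈ Icc (0:ℝ) 1,
        Tendsto (fun n => approx n z) atTop (𝓝 z) := by
      intro z hz
      have hup : ∀ n, approx n z ≤ z + (1/2)^n := by
        intro n
        refine (min_le_right _ _).trans ?_
        rw [div_le_iff₀ (by positivity)]
        have h1 : (⌈(2:ℝ)^n * z⌉ : ℝ) < (2:ℝ)^n * z + 1 := Int.ceil_lt_add_one _
        have h2 : ((1:ℝ)/2)^n * (2:ℝ)^n = 1 := by
          rw [← mul_pow]; norm_num
        nlinarith [pow_pos (by norm_num : (0:ℝ) < 2) n]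
      have hlow : ∀ n, z ≤ approx n z := fun n => (hmem n z hz).1
      have hupt : Tendsto (fun n : ℕ => z + (1/2)^n) atTop (𝓝 z) := by
        have := hhalf.const_add z
        simpa using this
      exact tendsto_of_tendsto_of_tendsto_of_le_of_le tendsto_const_nhds hupt hlow hup
    refine key_modification μ G hG X hXmeas approx happrox_meas happrox_count ?_
    intro z hz ω
    have h1 : Tendsto (fun n => approx n z) atTop (𝓝[Icc z 1] z) :=
      tendsto_nhdsWithin_of_tendsto_nhds_of_eventually_within _ (htendsto z hz)
        (Eventually.of_forall fun n => hmem n z hz)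
    exact (hR ω z hz).tendsto.comp h1
  · -- left-continuous case : dyadic approximation from below
    set approx : ℕ → ℝ → ℝ :=
      fun n z => max 0 ((⌊(2:ℝ)^n * z⌋ : ℝ) / 2^n) with happroxdef
    have happrox_meas : ∀ n, Measurable (approx n) := by
      intro n
      have h1 : Measurable fun z : ℝ => ⌊(2:ℝ)^n * z⌋ :=
        Int.measurable_floor.comp (measurable_id.const_mul _)
      exact (measurable_from_top (f := fun k : ℤ => max 0 ((k:ℝ)/2^n))).comp h1
    have happrox_count : ∀ n, (Set.range (approx n)).Countable := by
      intro n
      have : Set.range (approx n) ⊆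
          Set.range (fun k : ℤ => max 0 ((k:ℝ)/2^n)) := by
        rintro x ⟨z, rfl⟩
        exact ⟨⌊(2:ℝ)^n * z⌋, rfl⟩
      exact (Set.countable_range _).mono this
    have hmem : ∀ n, ∀ z ∈ Icc (0:ℝ) 1, approx n z ∈ Icc 0 z := by
      intro n z hz
      constructor
      · exact le_max_left _ _
      · refine max_le hz.1 ?_
        rw [div_le_iff₀ (by positivity)]
        calc (⌊(2:ℝ)^n * z⌋ : ℝ) ≤ (2:ℝ)^n * z := Int.floor_le _
          _ = z * 2^n := by ring
    have htendsto : ∀ z ∈ Icc (0:ℝ) 1,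
        Tendsto (fun n => approx n z) atTop (𝓝 z) := by
      intro z hz
      have hlow : ∀ n, z - (1/2)^n ≤ approx n z := by
        intro n
        refine le_trans ?_ (le_max_right _ _)
        rw [le_div_iff₀ (by positivity)]
        have h1 : (2:ℝ)^n * z - 1 < (⌊(2:ℝ)^n * z⌋ : ℝ) := Int.sub_one_lt_floor _
        have h2 : ((1:ℝ)/2)^n * (2:ℝ)^n = 1 := by
          rw [← mul_pow]; norm_num
        nlinarith [pow_pos (by norm_num : (0:ℝ) < 2) n]
      have hup : ∀ n, approx n z ≤ z := fun n => (hmem n z hz).2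
      have hlowt : Tendsto (fun n : ℕ => z - (1/2)^n) atTop (𝓝 z) := by
        have := tendsto_const_nhds.sub hhalf (f := fun _ : ℕ => z)
        simpa using this
      exact tendsto_of_tendsto_of_tendsto_of_le_of_le hlowt tendsto_const_nhds hlow hup
    refine key_modification μ G hG X hXmeas approx happrox_meas happrox_count ?_
    intro z hz ω
    have h1 : Tendsto (fun n => approx n z) atTop (𝓝[Icc 0 z] z) :=
      tendsto_nhdsWithin_of_tendsto_nhds_of_eventually_within _ (htendsto z hz)
        (Eventually.of_forall fun n => hmem n z hz)
    exact (hL ω z hz).tendsto.comp h1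

end ZSDG
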